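/- Let s0 ≥ 1 be an integer. For all integers q ≥ 1, s with s0 ≤ s ≤ 2s0−1 and t with 0 ≤ t ≤ 2^(q−1), setting m = s·2^(q−1) + t, the map F_{q,s,t} is a bijection from the set of integers {0, 1, …, m−1} onto itself. -/
import Mathlib


/-- `pos s0 i x q = ⌊((s0 + x)·2^q + i) / 2^(ν₂(i)+1)⌋` where `ν₂` is the 2-adic valuation. -/
def pos (s0 i x q : ℕ) : ℕ := ((s0 + x) * 2 ^ q + i) / 2 ^ (padicValNat 2 i + 1)

/-- The ideal round-mapping permutation `P_q` of round `q`. -/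
def P (s0 q j : ℕ) : ℕ := if j < s0 then j else pos s0 (j / s0) (j % s0) q

/-- The intermediate round-mapping `F_{q,s,t}` of round `q`, step `s`,
after `t` buckets have been added in the current step. -/
def F (s0 q s t j : ℕ) : ℕ :=
  if j < t * (s + 1) then
    let i' := j / (s + 1)
    let r := j % (s + 1)
    if r < s0 then P s0 (q - 1) (s0 * i' + r) else pos s0 (2 * i' + 1) (r - s0) q
  else
    let i' := t + (j - t * (s + 1)) / s
    let r := (j - t * (s + 1)) % s
    if r < s0 then P s0 (q - 1) (s0 * i' + r) else pos s0 (2 * i' + 1) (r - s0) q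

lemma val_two_pow_odd (e k : ℕ) : padicValNat 2 (2 ^ e * (2 * k + 1)) = e := by
  haveI : Fact (Nat.Prime 2) := ⟨Nat.prime_two⟩
  rw [padicValNat.mul (by positivity) (by omega), padicValNat.prime_pow,
    padicValNat.eq_zero_of_not_dvd (by omega)]
  omega

lemma pos_pow (s0 x e k d : ℕ) :
    pos s0 (2 ^ e * (2 * k + 1)) x (e + 1 + d) = (s0 + x) * 2 ^ d + k := by
  unfold pos
  rw [val_two_pow_odd]
  have h1 : (2:ℕ) ^ (e + 1 + d) = 2 ^ (e + 1) * 2 ^ d := by rw [pow_add]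
  have h2 : (2:ℕ) ^ (e + 1) = 2 ^ e * 2 := pow_succ 2 e
  have h2e : (0:ℕ) < 2 ^ e := by positivity
  have hnum : (s0 + x) * 2 ^ (e + 1 + d) + 2 ^ e * (2 * k + 1)
      = 2 ^ (e + 1) * ((s0 + x) * 2 ^ d + k) + 2 ^ e := by
    rw [h1, h2]; ring
  rw [hnum, Nat.mul_add_div (by positivity),
    Nat.div_eq_of_lt (by rw [h2]; omega), add_zero]

lemma pos_odd (s0 x i q : ℕ) (hq : 1 ≤ q) :
    pos s0 (2 * i + 1) x q = (s0 + x) * 2 ^ (q - 1) + i := by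
  have h := pos_pow s0 x 0 i (q - 1)
  have h0 : 0 + 1 + (q - 1) = q := by omega
  rw [h0] at h
  simpa using h

lemma encode_div (D a k : ℕ) (hD : 0 < D) (hk : k < D) : (a * D + k) / D = a := by
  rw [add_comm, Nat.add_mul_div_right _ _ hD, Nat.div_eq_of_lt hk, zero_add]

lemma encode_mod (D a k : ℕ) (hk : k < D) : (a * D + k) % D = k := by
  rw [mul_comm, Nat.mul_add_mod, Nat.mod_eq_of_lt hk]

lemma P_id {s0 p j : ℕ} (h : j < s0) : P s0 p j = j := by rw [P, if_pos h]

/-- Decomposition of a positive natural below `2^p` as `2^e * (2k+1)`. -/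
lemma exists_pow_odd {i p : ℕ} (hi : 1 ≤ i) (hip : i < 2 ^ p) :
    ∃ d k, d + 1 ≤ p ∧ k < 2 ^ d ∧ i = 2 ^ (p - 1 - d) * (2 * k + 1) := by
  obtain ⟨e, m, hm, he⟩ := Nat.exists_eq_pow_mul_and_not_dvd (show i ≠ 0 by omega) 2 (by norm_num)
  have hmk : m = 2 * (m / 2) + 1 := by omega
  set k := m / 2 with hk
  have h2e : 2 ^ e ≤ i := by
    rw [he]; exact Nat.le_mul_of_pos_right _ (by omega)
  have hep : e < p := by
    by_contra h
    have : (2:ℕ) ^ p ≤ 2 ^ e := Nat.pow_le_pow_right (by norm_num) (by omega)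
    omega
  refine ⟨p - 1 - e, k, by omega, ?_, ?_⟩
  · have hpe : (2:ℕ) ^ p = 2 ^ e * (2 * 2 ^ (p - 1 - e)) := by
      have : 2 * (2:ℕ) ^ (p - 1 - e) = 2 ^ (p - 1 - e + 1) := (pow_succ' 2 _).symm
      rw [this, ← pow_add]
      congr 1; omega
    have hlt := hip
    rw [he, hmk, hpe] at hlt
    have h2 : 2 * k + 1 < 2 * 2 ^ (p - 1 - e) := Nat.lt_of_mul_lt_mul_left hlt
    omega
  · rw [he, hmk]
    congr 2
    omega

lemma P_spec {s0 p j : ℕ} (h0 : 0 < s0) (h1 : s0 ≤ j) (h2 : j < s0 * 2 ^ p) :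
    ∃ d x k, d + 1 ≤ p ∧ x < s0 ∧ k < 2 ^ d ∧
      P s0 p j = (s0 + x) * 2 ^ d + k ∧
      j = s0 * (2 ^ (p - 1 - d) * (2 * k + 1)) + x := by
  have hi1 : 1 ≤ j / s0 := (Nat.one_le_div_iff h0).mpr h1
  have hip : j / s0 < 2 ^ p := (Nat.div_lt_iff_lt_mul h0).mpr (by rw [mul_comm]; exact h2)
  obtain ⟨d, k, hdp, hk, hik⟩ := exists_pow_odd hi1 hip
  refine ⟨d, j % s0, k, hdp, Nat.mod_lt _ h0, hk, ?_, ?_⟩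
  · rw [P, if_neg (by omega), hik]
    have hpp := pos_pow s0 (j % s0) (p - 1 - d) k d
    rw [show p - 1 - d + 1 + d = p by omega] at hpp
    exact hpp
  · rw [← hik]
    exact (Nat.div_add_mod j s0).symm

lemma P_lt {s0 p j : ℕ} (h0 : 0 < s0) (hj : j < s0 * 2 ^ p) : P s0 p j < s0 * 2 ^ p := by
  by_cases h : j < s0
  · rw [P, if_pos h]
    calc j < s0 := h
    _ ≤ s0 * 2 ^ p := Nat.le_mul_of_pos_right _ (by positivity)
  · obtain ⟨d, x, k, hdp, hx, hk, hP, _⟩ := P_spec h0 (by omega) hj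
    rw [hP]
    have hstep : (s0 + x + 1) * 2 ^ d ≤ 2 * s0 * 2 ^ d := Nat.mul_le_mul_right _ (by omega)
    have h2 : 2 * s0 * 2 ^ d = s0 * 2 ^ (d + 1) := by rw [pow_succ]; ring
    have h3 : s0 * 2 ^ (d + 1) ≤ s0 * 2 ^ p :=
      Nat.mul_le_mul_left _ (Nat.pow_le_pow_right (by norm_num) hdp)
    have h4 : (s0 + x + 1) * 2 ^ d = (s0 + x) * 2 ^ d + 2 ^ d := by ring
    linarith

lemma P_ge {s0 p j : ℕ} (h0 : 0 < s0) (h1 : s0 ≤ j) (h2 : j < s0 * 2 ^ p) :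
    s0 ≤ P s0 p j := by
  obtain ⟨d, x, k, _, _, _, hP, _⟩ := P_spec h0 h1 h2
  rw [hP]
  have hD : (1:ℕ) ≤ 2 ^ d := Nat.one_le_two_pow
  have : s0 * 1 ≤ (s0 + x) * 2 ^ d := Nat.mul_le_mul (by omega) hD
  omega

lemma P_inj {s0 p j1 j2 : ℕ} (h0 : 0 < s0) (hj1 : j1 < s0 * 2 ^ p) (hj2 : j2 < s0 * 2 ^ p)
    (he : P s0 p j1 = P s0 p j2) : j1 = j2 := by
  by_cases c1 : j1 < s0 <;> by_cases c2 : j2 < s0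
  · rwa [P_id c1, P_id c2] at he
  · exfalso
    rw [P_id c1] at he
    have := P_ge h0 (by omega) hj2
    omega
  · exfalso
    rw [P_id c2] at he
    have := P_ge h0 (by omega) hj1
    omega
  · obtain ⟨d1, x1, k1, hd1, hx1, hk1, hP1, hj1E⟩ := P_spec h0 (by omega) hj1
    obtain ⟨d2, x2, k2, hd2, hx2, hk2, hP2, hj2E⟩ := P_spec h0 (by omega) hj2
    rw [hP1, hP2] at he
    have lb : ∀ d x k : ℕ, x < s0 → k < 2 ^ d →
        s0 * 2 ^ d ≤ (s0 + x) * 2 ^ d + k ∧ (s0 + x) * 2 ^ d + k < s0 * 2 ^ (d + 1) := by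
      intro d x k hx hk
      constructor
      · have : s0 * 2 ^ d ≤ (s0 + x) * 2 ^ d := Nat.mul_le_mul_right _ (by omega)
        omega
      · have e1 : s0 * 2 ^ (d + 1) = 2 * s0 * 2 ^ d := by rw [pow_succ]; ring
        have e2 : (s0 + x + 1) * 2 ^ d ≤ 2 * s0 * 2 ^ d := Nat.mul_le_mul_right _ (by omega)
        have e3 : (s0 + x + 1) * 2 ^ d = (s0 + x) * 2 ^ d + 2 ^ d := by ring
        linarith
    obtain ⟨l1, u1⟩ := lb d1 x1 k1 hx1 hk1
    obtain ⟨l2, u2⟩ := lb d2 x2 k2 hx2 hk2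
    have hd : d1 = d2 := by
      have a1 : s0 * 2 ^ d2 < s0 * 2 ^ (d1 + 1) := by rw [← he] at l2; linarith
      have a2 : s0 * 2 ^ d1 < s0 * 2 ^ (d2 + 1) := by rw [he] at l1; linarith
      have b1 : (2:ℕ) ^ d2 < 2 ^ (d1 + 1) := Nat.lt_of_mul_lt_mul_left a1
      have b2 : (2:ℕ) ^ d1 < 2 ^ (d2 + 1) := Nat.lt_of_mul_lt_mul_left a2
      have c1 := (Nat.pow_lt_pow_iff_right (by norm_num : 1 < 2)).mp b1
      have c2 := (Nat.pow_lt_pow_iff_right (by norm_num : 1 < 2)).mp b2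
      omega
    subst hd
    have e1 := encode_div (2 ^ d1) (s0 + x1) k1 (by positivity) hk1
    have e2 := encode_div (2 ^ d1) (s0 + x2) k2 (by positivity) hk2
    rw [he, e2] at e1
    have hx : x1 = x2 := by omega
    have m1 := encode_mod (2 ^ d1) (s0 + x1) k1 hk1
    have m2 := encode_mod (2 ^ d1) (s0 + x2) k2 hk2
    rw [he, m2] at m1
    subst hx
    subst m1
    rw [hj1E, hj2E]

lemma F_decomp (s0 q s t j : ℕ) (hq : 1 ≤ q) (hs : 1 ≤ s) (ht : t ≤ 2 ^ (q - 1))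
    (hj : j < s * 2 ^ (q - 1) + t) :
    ∃ i' r, i' < 2 ^ (q - 1) ∧ r < s + (if i' < t then 1 else 0) ∧
      j = min i' t + i' * s + r ∧
      F s0 q s t j = if r < s0 then P s0 (q - 1) (s0 * i' + r) else r * 2 ^ (q - 1) + i' := by
  by_cases hlt : j < t * (s + 1)
  · have hit : j / (s + 1) < t := (Nat.div_lt_iff_lt_mul (by omega)).mpr hlt
    have hmod : j % (s + 1) < s + 1 := Nat.mod_lt _ (by omega)
    have hdm := Nat.div_add_mod j (s + 1)
    refine ⟨j / (s + 1), j % (s + 1), by omega, by rw [if_pos hit]; omega, ?_, ?_⟩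
    · conv_lhs => rw [← hdm]
      rw [min_eq_left hit.le]
      ring
    · unfold F
      rw [if_pos hlt]
      show (if j % (s + 1) < s0 then P s0 (q - 1) (s0 * (j / (s + 1)) + j % (s + 1))
        else pos s0 (2 * (j / (s + 1)) + 1) (j % (s + 1) - s0) q) = _
      by_cases hr : j % (s + 1) < s0
      · rw [if_pos hr, if_pos hr]
      · rw [if_neg hr, if_neg hr, pos_odd s0 _ _ q hq,
          show s0 + (j % (s + 1) - s0) = j % (s + 1) by omega]
  · have hge : t * (s + 1) ≤ j := by omega
    set u := j - t * (s + 1) with hu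
    obtain ⟨c, hc⟩ := Nat.exists_eq_add_of_le ht
    have h1 : s * (t + c) + t = t * (s + 1) + c * s := by ring
    have h2 : j < t * (s + 1) + c * s := by rw [← h1, ← hc]; exact hj
    have key : u < c * s := by
      rw [hu, tsub_lt_iff_right hge]
      linarith
    have hdiv : u / s < c := (Nat.div_lt_iff_lt_mul (by omega)).mpr key
    have hdm := Nat.div_add_mod u s
    have hmod : u % s < s := Nat.mod_lt _ (by omega)
    have hi'lt : t + u / s < 2 ^ (q - 1) := by rw [hc]; exact Nat.add_lt_add_left hdiv t
    have hnotlt : ¬ (t + u / s < t) := Nat.not_lt.mpr (Nat.le_add_right t _)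
    refine ⟨t + u / s, u % s, hi'lt, by rw [if_neg hnotlt]; simpa using hmod, ?_, ?_⟩
    · rw [min_eq_right (Nat.le_add_right t (u / s))]
      have h3 : t + (t + u / s) * s + u % s = t * (s + 1) + u := by
        conv_rhs => rw [← hdm]
        ring
      rw [h3, hu, Nat.add_sub_cancel' hge]
    · unfold F
      rw [if_neg hlt]
      show (if u % s < s0 then P s0 (q - 1) (s0 * (t + u / s) + u % s)
        else pos s0 (2 * (t + u / s) + 1) (u % s - s0) q) = _
      by_cases hr : u % s < s0
      · rw [if_pos hr, if_pos hr]
      · rw [if_neg hr, if_neg hr, pos_odd s0 _ _ q hq,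
          show s0 + (u % s - s0) = u % s by omega]

theorem stmt_8 (s0 : ℕ) (hs0 : 1 ≤ s0) (q s t : ℕ) (hq : 1 ≤ q)
    (hs1 : s0 ≤ s) (hs2 : s ≤ 2 * s0 - 1) (ht : t ≤ 2 ^ (q - 1)) :
    Set.BijOn (F s0 q s t)
      (Set.Ico 0 (s * 2 ^ (q - 1) + t)) (Set.Ico 0 (s * 2 ^ (q - 1) + t)) := by
  have hs : 1 ≤ s := le_trans hs0 hs1
  have hN1 : 1 ≤ 2 ^ (q - 1) := Nat.one_le_two_pow
  have bound : ∀ i r : ℕ, i < 2 ^ (q - 1) → r < s0 → s0 * i + r < s0 * 2 ^ (q - 1) := by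
    intro i r hi hr
    have h1 : s0 * (i + 1) ≤ s0 * 2 ^ (q - 1) := Nat.mul_le_mul_left _ (by omega)
    have h2 : s0 * (i + 1) = s0 * i + s0 := by ring
    omega
  have hmaps : Set.MapsTo (F s0 q s t) (Set.Ico 0 (s * 2 ^ (q - 1) + t)) (Set.Ico 0 (s * 2 ^ (q - 1) + t)) := by
    intro j hj
    simp only [Set.mem_Ico] at hj ⊢
    obtain ⟨i', r, hi', hr, _, hF⟩ := F_decomp s0 q s t j hq hs ht hj.2
    refine ⟨Nat.zero_le _, ?_⟩
    rw [hF]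
    by_cases hrs : r < s0
    · rw [if_pos hrs]
      have h1 := P_lt (p := q - 1) (by omega) (bound i' r hi' hrs)
      have h2 : s0 * 2 ^ (q - 1) ≤ s * 2 ^ (q - 1) := Nat.mul_le_mul_right _ hs1
      omega
    · rw [if_neg hrs]
      by_cases hit : i' < t
      · rw [if_pos hit] at hr
        have h1 : r * 2 ^ (q - 1) ≤ s * 2 ^ (q - 1) := Nat.mul_le_mul_right _ (by omega)
        omega
      · rw [if_neg hit] at hr
        have h1 : (r + 1) * 2 ^ (q - 1) ≤ s * 2 ^ (q - 1) := Nat.mul_le_mul_right _ (by omega)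
        have h2 : (r + 1) * 2 ^ (q - 1) = r * 2 ^ (q - 1) + 2 ^ (q - 1) := by ring
        omega
  have hinj : Set.InjOn (F s0 q s t) (Set.Ico 0 (s * 2 ^ (q - 1) + t)) := by
    intro j1 hj1 j2 hj2 hFe
    simp only [Set.mem_Ico] at hj1 hj2
    obtain ⟨i1, r1, hi1, hr1, hj1E, hF1⟩ := F_decomp s0 q s t j1 hq hs ht hj1.2
    obtain ⟨i2, r2, hi2, hr2, hj2E, hF2⟩ := F_decomp s0 q s t j2 hq hs ht hj2.2
    rw [hF1, hF2] at hFe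
    have key : i1 = i2 ∧ r1 = r2 := by
      by_cases c1 : r1 < s0 <;> by_cases c2 : r2 < s0
      · rw [if_pos c1, if_pos c2] at hFe
        have heq := P_inj (p := q - 1) (by omega) (bound i1 r1 hi1 c1) (bound i2 r2 hi2 c2) hFe
        have e1 : (i1 * s0 + r1) / s0 = i1 := encode_div s0 i1 r1 (by omega) c1
        have e2 : (i2 * s0 + r2) / s0 = i2 := encode_div s0 i2 r2 (by omega) c2
        have m1 : (i1 * s0 + r1) % s0 = r1 := encode_mod s0 i1 r1 c1
        have m2 : (i2 * s0 + r2) % s0 = r2 := encode_mod s0 i2 r2 c2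
        have heq' : i1 * s0 + r1 = i2 * s0 + r2 := by
          rw [mul_comm i1 s0, mul_comm i2 s0]; exact heq
        constructor
        · rw [← e1, ← e2, heq']
        · rw [← m1, ← m2, heq']
      · exfalso
        rw [if_pos c1, if_neg c2] at hFe
        have h1 := P_lt (p := q - 1) (by omega) (bound i1 r1 hi1 c1)
        have h2 : s0 * 2 ^ (q - 1) ≤ r2 * 2 ^ (q - 1) := Nat.mul_le_mul_right _ (by omega)
        omega
      · exfalso
        rw [if_neg c1, if_pos c2] at hFe
        have h1 := P_lt (p := q - 1) (by omega) (bound i2 r2 hi2 c2)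
        have h2 : s0 * 2 ^ (q - 1) ≤ r1 * 2 ^ (q - 1) := Nat.mul_le_mul_right _ (by omega)
        omega
      · rw [if_neg c1, if_neg c2] at hFe
        have e1 : (r1 * 2 ^ (q - 1) + i1) / 2 ^ (q - 1) = r1 := encode_div (2 ^ (q - 1)) r1 i1 (by omega) hi1
        have e2 : (r2 * 2 ^ (q - 1) + i2) / 2 ^ (q - 1) = r2 := encode_div (2 ^ (q - 1)) r2 i2 (by omega) hi2
        have m1 : (r1 * 2 ^ (q - 1) + i1) % 2 ^ (q - 1) = i1 := encode_mod (2 ^ (q - 1)) r1 i1 hi1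
        have m2 : (r2 * 2 ^ (q - 1) + i2) % 2 ^ (q - 1) = i2 := encode_mod (2 ^ (q - 1)) r2 i2 hi2
        constructor
        · rw [← m1, ← m2, hFe]
        · rw [← e1, ← e2, hFe]
    obtain ⟨hi, hr⟩ := key
    rw [hj1E, hj2E, hi, hr]
  exact ((Set.finite_Ico 0 (s * 2 ^ (q - 1) + t)).injOn_iff_bijOn_of_mapsTo hmaps).mp hinj
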